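/- arXiv:2310.00604 — 4 statements merged into one kernel-verified Lean document; each statement's English description precedes it below -/
import Mathlib

section
/- Let K be the path-structured kernel tensor built from matrices K^1,…,K^{s−1} and let U be the rank-one tensor built from vectors u_1,…,u_s, and let K⊙U denote their entrywise product. Then for every σ ∈ {1,…,s}, the σ-th marginal projection satisfies proj_σ(K⊙U) = L_σ ⊙ u_σ ⊙ R_σ, i.e., componentwise, Σ_{(i_1,…,i_s): i_σ = j} K(i)U(i) = (L_σ)_j (u_σ)_j (R_σ)_j for every j ∈ {1,…,n}. -/
open Finset Matrix

/-- Marginal projection of an order-`s` tensor on `n` points. -/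
noncomputable def proj {n s : ℕ} (M : (Fin s → Fin n) → ℝ) (σ : Fin s) : Fin n → ℝ :=
  fun j => ∑ i : Fin s → Fin n, if i σ = j then M i else 0

/-- Path-structured kernel tensor built from matrices `Km 0, …, Km (s-2)`
(0-indexed versions of `K^1, …, K^{s-1}`). -/
noncomputable def pathK {n : ℕ} (s : ℕ) (Km : ℕ → Matrix (Fin n) (Fin n) ℝ) :
    (Fin s → Fin n) → ℝ :=
  fun i => ∏ σ : Fin (s - 1),
    Km σ.1 (i ⟨σ.1, by have := σ.isLt; omega⟩) (i ⟨σ.1 + 1, by have := σ.isLt; omega⟩)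

/-- Rank-one tensor built from vectors `u 0, …, u (s-1)`. -/
noncomputable def rankOne {n : ℕ} (s : ℕ) (u : ℕ → Fin n → ℝ) : (Fin s → Fin n) → ℝ :=
  fun i => ∏ σ : Fin s, u σ.1 (i σ)

/-- Left vectors: `L_1 = 𝟙`, `L_{σ+1} = (K^σ)ᵀ (u_σ ⊙ L_σ)` (0-indexed). -/
noncomputable def Lvec {n : ℕ} (Km : ℕ → Matrix (Fin n) (Fin n) ℝ) (u : ℕ → Fin n → ℝ) :
    ℕ → Fin n → ℝ
  | 0 => 1
  | σ + 1 => (Km σ)ᵀ *ᵥ (u σ * Lvec Km u σ)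

/-- Right vectors: `R_s = 𝟙`, `R_σ = K^σ (u_{σ+1} ⊙ R_{σ+1})` (0-indexed: `R_{s-1} = 𝟙`). -/
noncomputable def Rvec {n : ℕ} (s : ℕ) (Km : ℕ → Matrix (Fin n) (Fin n) ℝ) (u : ℕ → Fin n → ℝ)
    (σ : ℕ) : Fin n → ℝ :=
  if h : σ < s - 1 then Km σ *ᵥ (u (σ + 1) * Rvec s Km u (σ + 1)) else 1
  termination_by s - 1 - σ
  decreasing_by omega


/-- extend a tuple by default value `j` past the end -/
def extL {n t : ℕ} (l : Fin t → Fin n) (j : Fin n) : ℕ → Fin n :=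
  fun m => if h : m < t then l ⟨m, h⟩ else j

/-- path starting at `j` followed by `r` -/
def extC {n c : ℕ} (j : Fin n) (r : Fin c → Fin n) : ℕ → Fin n :=
  fun m => if h : 0 < m ∧ m ≤ c then r ⟨m - 1, by omega⟩ else j

lemma sum_pi_snoc {n N : ℕ} (f : (Fin (N+1) → Fin n) → ℝ) :
    ∑ l : Fin (N+1) → Fin n, f l
      = ∑ k : Fin n, ∑ l : Fin N → Fin n, f (Fin.snoc l k) := by
  rw [← Fintype.sum_equiv (Fin.snocEquiv (fun _ => Fin n))
    (fun p => f (Fin.snoc p.2 p.1)) f (fun p => rfl), Fintype.sum_prod_type]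

lemma sum_pi_cons {n N : ℕ} (f : (Fin (N+1) → Fin n) → ℝ) :
    ∑ r : Fin (N+1) → Fin n, f r
      = ∑ k : Fin n, ∑ r : Fin N → Fin n, f (Fin.cons k r) := by
  rw [← Fintype.sum_equiv (Fin.consEquiv (fun _ => Fin n))
    (fun p => f (Fin.cons p.1 p.2)) f (fun p => rfl), Fintype.sum_prod_type]

lemma extL_snoc {n t : ℕ} (l : Fin t → Fin n) (k j : Fin n) {m : ℕ} (hm : m ≤ t) :
    extL (Fin.snoc l k) j m = extL l k m := by
  unfold extL
  rcases lt_or_eq_of_le hm with h | h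
  · rw [dif_pos (by omega : m < t + 1), dif_pos h]
    exact Fin.snoc_castSucc (α := fun _ => Fin n) (x := k) (p := l) (i := ⟨m, h⟩)
  · subst h
    rw [dif_pos (by omega : m < m + 1), dif_neg (lt_irrefl m)]
    exact Fin.snoc_last _ _

lemma extL_last {n t : ℕ} (l : Fin t → Fin n) (j : Fin n) {m : ℕ} (hm : t ≤ m) :
    extL l j m = j := by
  unfold extL; rw [dif_neg (by omega)]

lemma extC_zero {n c : ℕ} (j : Fin n) (r : Fin c → Fin n) : extC j r 0 = j := by
  unfold extC; rw [dif_neg (by omega)]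

lemma extC_pos {n c : ℕ} (j : Fin n) (r : Fin c → Fin n) {m : ℕ} (h0 : 0 < m) (hc : m ≤ c) :
    extC j r m = r ⟨m - 1, by omega⟩ := by
  unfold extC; rw [dif_pos ⟨h0, hc⟩]

lemma extC_cons {n c : ℕ} (k j : Fin n) (r : Fin c → Fin n) {m : ℕ} (hm : m ≤ c) :
    extC j (Fin.cons k r) (m + 1) = extC k r m := by
  rw [extC_pos j _ (by omega) (by omega)]
  rcases Nat.eq_zero_or_pos m with h | h
  · subst h
    rw [extC_zero]
    exact Fin.cons_zero (α := fun _ => Fin n) k r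
  · rw [extC_pos k r h hm]
    have : (⟨m + 1 - 1, by omega⟩ : Fin (c+1)) = Fin.succ ⟨m - 1, by omega⟩ := by
      apply Fin.ext; simp; omega
    rw [this]
    exact Fin.cons_succ (α := fun _ => Fin n) k r _

lemma Lsum {n : ℕ} (Km : ℕ → Matrix (Fin n) (Fin n) ℝ) (u : ℕ → Fin n → ℝ) :
    ∀ (t : ℕ) (j : Fin n),
    (∑ l : Fin t → Fin n, ∏ τ ∈ Finset.range t,
        (u τ (extL l j τ) * Km τ (extL l j τ) (extL l j (τ + 1))))
      = Lvec Km u t j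
  | 0, j => by simp [Lvec]
  | t + 1, j => by
    rw [sum_pi_snoc]
    have key : ∀ (k : Fin n) (l : Fin t → Fin n),
        (∏ τ ∈ Finset.range (t+1),
          (u τ (extL (Fin.snoc l k) j τ) * Km τ (extL (Fin.snoc l k) j τ)
            (extL (Fin.snoc l k) j (τ + 1))))
        = (∏ τ ∈ Finset.range t,
            (u τ (extL l k τ) * Km τ (extL l k τ) (extL l k (τ + 1))))
            * (u t k * Km t k j) := by
      intro k l
      rw [Finset.prod_range_succ]
      congr 1
      · refine Finset.prod_congr rfl (fun τ hτ => ?_)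
        rw [Finset.mem_range] at hτ
        rw [extL_snoc l k j (by omega), extL_snoc l k j (by omega)]
      · rw [extL_snoc l k j (le_refl t), extL_last l k (le_refl t),
          extL_last _ _ (by omega : t + 1 ≤ t + 1)]
    have rhs : Lvec Km u (t+1) j = ∑ k : Fin n, (u t k * Km t k j) * Lvec Km u t k := by
      show ((Km t)ᵀ *ᵥ (u t * Lvec Km u t)) j = _
      simp [Matrix.mulVec, dotProduct, Matrix.transpose_apply, Pi.mul_apply]
      exact Finset.sum_congr rfl (fun k _ => by ring)
    rw [rhs]
    refine Finset.sum_congr rfl (fun k _ => ?_)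
    calc (∑ l : Fin t → Fin n, ∏ τ ∈ Finset.range (t+1),
          (u τ (extL (Fin.snoc l k) j τ) * Km τ (extL (Fin.snoc l k) j τ)
            (extL (Fin.snoc l k) j (τ + 1))))
        = ∑ l : Fin t → Fin n, (∏ τ ∈ Finset.range t,
            (u τ (extL l k τ) * Km τ (extL l k τ) (extL l k (τ + 1)))) * (u t k * Km t k j) :=
          Finset.sum_congr rfl (fun l _ => key k l)
      _ = (∑ l : Fin t → Fin n, ∏ τ ∈ Finset.range t,
            (u τ (extL l k τ) * Km τ (extL l k τ) (extL l k (τ + 1)))) * (u t k * Km t k j) := by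
          rw [Finset.sum_mul]
      _ = (u t k * Km t k j) * Lvec Km u t k := by rw [Lsum Km u t k, mul_comm]

lemma Rsum {n : ℕ} (Km : ℕ → Matrix (Fin n) (Fin n) ℝ) (u : ℕ → Fin n → ℝ) (s : ℕ) :
    ∀ (c p : ℕ), p + c + 1 = s → ∀ j : Fin n,
    (∑ r : Fin c → Fin n, ∏ τ ∈ Finset.range c,
        (Km (p + τ) (extC j r τ) (extC j r (τ + 1)) * u (p + τ + 1) (extC j r (τ + 1))))
      = Rvec s Km u p j
  | 0, p, h, j => by
    rw [Rvec, dif_neg (by omega)]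
    simp
  | c + 1, p, h, j => by
    rw [Rvec, dif_pos (by omega)]
    rw [sum_pi_cons]
    have key : ∀ (k : Fin n) (r : Fin c → Fin n),
        (∏ τ ∈ Finset.range (c + 1),
          (Km (p + τ) (extC j (Fin.cons k r) τ) (extC j (Fin.cons k r) (τ + 1)) *
            u (p + τ + 1) (extC j (Fin.cons k r) (τ + 1))))
        = (Km p j k * u (p + 1) k) *
            ∏ τ ∈ Finset.range c,
              (Km (p + 1 + τ) (extC k r τ) (extC k r (τ + 1)) *
                u (p + 1 + τ + 1) (extC k r (τ + 1))) := by
      intro k r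
      rw [Finset.prod_range_succ']
      rw [mul_comm]
      refine congrArg₂ (· * ·) ?_ ?_
      · have h1 : extC j (Fin.cons k r : Fin (c+1) → Fin n) 0 = j := extC_zero _ _
        have h2 : extC j (Fin.cons k r : Fin (c+1) → Fin n) (0 + 1) = k := by
          rw [extC_cons k j r (by omega), extC_zero]
        rw [h1, h2]
        norm_num
      · refine Finset.prod_congr rfl (fun τ hτ => ?_)
        rw [Finset.mem_range] at hτ
        rw [extC_cons k j r (by omega : τ + 1 ≤ c),
          extC_cons k j r (by omega : τ ≤ c)]
        have e1 : p + (τ + 1) = p + 1 + τ := by omega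
        rw [e1]
    have rhs : (Km p *ᵥ (u (p + 1) * Rvec s Km u (p + 1))) j
        = ∑ k : Fin n, (Km p j k * u (p + 1) k) * Rvec s Km u (p + 1) k := by
      simp [Matrix.mulVec, dotProduct, Pi.mul_apply]
      exact Finset.sum_congr rfl (fun k _ => by ring)
    rw [rhs]
    refine Finset.sum_congr rfl (fun k _ => ?_)
    calc (∑ r : Fin c → Fin n, ∏ τ ∈ Finset.range (c + 1),
          (Km (p + τ) (extC j (Fin.cons k r) τ) (extC j (Fin.cons k r) (τ + 1)) *
            u (p + τ + 1) (extC j (Fin.cons k r) (τ + 1))))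
        = ∑ r : Fin c → Fin n, (Km p j k * u (p + 1) k) *
            ∏ τ ∈ Finset.range c,
              (Km (p + 1 + τ) (extC k r τ) (extC k r (τ + 1)) *
                u (p + 1 + τ + 1) (extC k r (τ + 1))) :=
          Finset.sum_congr rfl (fun r _ => key k r)
      _ = (Km p j k * u (p + 1) k) * ∑ r : Fin c → Fin n,
            ∏ τ ∈ Finset.range c,
              (Km (p + 1 + τ) (extC k r τ) (extC k r (τ + 1)) *
                u (p + 1 + τ + 1) (extC k r (τ + 1))) := by rw [Finset.mul_sum]
      _ = (Km p j k * u (p + 1) k) * Rvec s Km u (p + 1) k := by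
          rw [Rsum Km u s c (p + 1) (by omega) k]

lemma pathK_eq_range {n s : ℕ} (Km : ℕ → Matrix (Fin n) (Fin n) ℝ) (i : Fin s → Fin n)
    (d : Fin n) :
    pathK s Km i = ∏ τ ∈ Finset.range (s - 1),
      Km τ ((fun m => if hm : m < s then i ⟨m, hm⟩ else d) τ)
          ((fun m => if hm : m < s then i ⟨m, hm⟩ else d) (τ + 1)) := by
  rw [← Fin.prod_univ_eq_prod_range]
  unfold pathK
  refine Finset.prod_congr rfl (fun τ _ => ?_)
  have h1 : τ.1 < s := by have := τ.isLt; omega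
  have h2 : τ.1 + 1 < s := by have := τ.isLt; omega
  simp only [dif_pos h1, dif_pos h2]

lemma rankOne_eq_range {n s : ℕ} (u : ℕ → Fin n → ℝ) (i : Fin s → Fin n) (d : Fin n) :
    rankOne s u i = ∏ τ ∈ Finset.range s,
      u τ ((fun m => if hm : m < s then i ⟨m, hm⟩ else d) τ) := by
  rw [← Fin.prod_univ_eq_prod_range]
  unfold rankOne
  refine Finset.prod_congr rfl (fun τ _ => ?_)
  simp only [dif_pos τ.isLt]

def glue {n : ℕ} (s a c : ℕ) (h : a + c + 1 = s) (j : Fin n)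
    (l : Fin a → Fin n) (r : Fin c → Fin n) : Fin s → Fin n :=
  fun τ => if h1 : τ.1 < a then l ⟨τ.1, h1⟩
    else if h2 : τ.1 = a then j
    else r ⟨τ.1 - a - 1, by have := τ.2; omega⟩

lemma glue_extL {n : ℕ} (s a c : ℕ) (h : a + c + 1 = s) (j : Fin n)
    (l : Fin a → Fin n) (r : Fin c → Fin n) {m : ℕ} (hm : m ≤ a) :
    (if hs : m < s then glue s a c h j l r ⟨m, hs⟩ else j) = extL l j m := by
  rw [dif_pos (by omega : m < s)]
  unfold glue extL
  rcases lt_or_eq_of_le hm with h' | h'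
  · rw [dif_pos h', dif_pos h']
  · subst h'
    rw [dif_neg (show ¬m < m from by omega), dif_pos (rfl : m = m),
      dif_neg (show ¬m < m from by omega)]

lemma glue_extC {n : ℕ} (s a c : ℕ) (h : a + c + 1 = s) (j : Fin n)
    (l : Fin a → Fin n) (r : Fin c → Fin n) {m : ℕ} (hm : m ≤ c) :
    (if hs : a + m < s then glue s a c h j l r ⟨a + m, hs⟩ else j) = extC j r m := by
  rw [dif_pos (by omega : a + m < s)]
  unfold glue
  rcases Nat.eq_zero_or_pos m with h' | h'
  · subst h'
    rw [dif_neg (show ¬a + 0 < a from by omega), dif_pos (show a + 0 = a from by omega),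
      extC_zero]
  · rw [dif_neg (show ¬a + m < a from by omega), dif_neg (show ¬a + m = a from by omega),
      extC_pos j r h' hm]
    congr 1
    apply Fin.ext
    show a + m - a - 1 = m - 1
    omega

lemma main_aux {n : ℕ} (Km : ℕ → Matrix (Fin n) (Fin n) ℝ) (u : ℕ → Fin n → ℝ)
    (s a c : ℕ) (h : a + c + 1 = s) (j : Fin n) :
    (∑ i : Fin s → Fin n,
        if i ⟨a, by omega⟩ = j then pathK s Km i * rankOne s u i else 0)
      = Lvec Km u a j * u a j * Rvec s Km u a j := by
  -- Step A: reindex the sum by pairs (l, r)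
  have gs : ∀ x : Fin s → Fin n, x ⟨a, by omega⟩ = j →
      glue s a c h j (fun τ => x ⟨τ.1, by have := τ.2; omega⟩)
        (fun τ => x ⟨a + 1 + τ.1, by have := τ.2; omega⟩) = x := by
    intro x hx
    funext τ
    unfold glue
    by_cases h1 : τ.1 < a
    · rw [dif_pos h1]
    · rw [dif_neg h1]
      by_cases h2 : τ.1 = a
      · rw [dif_pos h2, ← hx]
        congr 1
        exact Fin.ext h2.symm
      · rw [dif_neg h2]
        show x ⟨a + 1 + (τ.1 - a - 1), by have := τ.2; omega⟩ = x τ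
        congr 1
        apply Fin.ext
        show a + 1 + (τ.1 - a - 1) = τ.1
        omega
  have hA : (∑ i : Fin s → Fin n,
        if i ⟨a, by omega⟩ = j then pathK s Km i * rankOne s u i else 0)
      = ∑ p : (Fin a → Fin n) × (Fin c → Fin n),
          pathK s Km (glue s a c h j p.1 p.2) * rankOne s u (glue s a c h j p.1 p.2) := by
    rw [← Finset.sum_filter]
    refine Finset.sum_bij'
      (fun x _ => ((fun τ => x ⟨τ.1, by have := τ.2; omega⟩,
          fun τ => x ⟨a + 1 + τ.1, by have := τ.2; omega⟩) :
          (Fin a → Fin n) × (Fin c → Fin n)))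
      (fun p _ => glue s a c h j p.1 p.2)
      (fun x hx => Finset.mem_univ _) ?_ ?_ ?_ ?_
    · intro p _
      rw [Finset.mem_filter]
      refine ⟨Finset.mem_univ _, ?_⟩
      show glue s a c h j p.1 p.2 ⟨a, _⟩ = j
      unfold glue
      rw [dif_neg (lt_irrefl a), dif_pos rfl]
    · intro x hx
      rw [Finset.mem_filter] at hx
      exact gs x hx.2
    · intro p _
      refine Prod.ext ?_ ?_
      · funext τ
        show glue s a c h j p.1 p.2 ⟨τ.1, _⟩ = p.1 τ
        unfold glue
        rw [dif_pos τ.isLt]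
      · funext τ
        show glue s a c h j p.1 p.2 ⟨a + 1 + τ.1, _⟩ = p.2 τ
        unfold glue
        rw [dif_neg (show ¬a + 1 + τ.1 < a from by omega),
          dif_neg (show ¬a + 1 + τ.1 = a from by omega)]
        have hidx : (⟨a + 1 + τ.1 - a - 1, by have := τ.2; omega⟩ : Fin c) = τ :=
          Fin.ext (show a + 1 + τ.1 - a - 1 = τ.1 from by have := τ.2; omega)
        exact congrArg p.2 hidx
    · intro x hx
      rw [Finset.mem_filter] at hx
      rw [gs x hx.2]
  rw [hA, Fintype.sum_prod_type]
  -- Step B: pointwise factorization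
  have hB : ∀ (l : Fin a → Fin n) (r : Fin c → Fin n),
      pathK s Km (glue s a c h j l r) * rankOne s u (glue s a c h j l r)
        = (∏ τ ∈ Finset.range a,
            (u τ (extL l j τ) * Km τ (extL l j τ) (extL l j (τ + 1))))
          * (u a j *
            ∏ τ ∈ Finset.range c,
              (Km (a + τ) (extC j r τ) (extC j r (τ + 1)) *
                u (a + τ + 1) (extC j r (τ + 1)))) := by
    intro l r
    rw [pathK_eq_range Km _ j, rankOne_eq_range u _ j]
    rw [show Finset.range (s - 1) = Finset.range (a + c) from by
      rw [show s - 1 = a + c from by omega]]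
    rw [show Finset.range s = Finset.range (a + (c + 1)) from by
      rw [show s = a + (c + 1) from by omega]]
    rw [Finset.prod_range_add, Finset.prod_range_add, Finset.prod_range_succ']
    have KA : (∏ τ ∈ Finset.range a,
        Km τ ((fun m => if hm : m < s then glue s a c h j l r ⟨m, hm⟩ else j) τ)
          ((fun m => if hm : m < s then glue s a c h j l r ⟨m, hm⟩ else j) (τ + 1)))
        = ∏ τ ∈ Finset.range a, Km τ (extL l j τ) (extL l j (τ + 1)) := by
      refine Finset.prod_congr rfl (fun τ hτ => ?_)
      rw [Finset.mem_range] at hτ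
      simp only []
      rw [glue_extL s a c h j l r (by omega : τ ≤ a),
        glue_extL s a c h j l r (by omega : τ + 1 ≤ a)]
    have KC : (∏ τ ∈ Finset.range c,
        Km (a + τ) ((fun m => if hm : m < s then glue s a c h j l r ⟨m, hm⟩ else j) (a + τ))
          ((fun m => if hm : m < s then glue s a c h j l r ⟨m, hm⟩ else j) (a + τ + 1)))
        = ∏ τ ∈ Finset.range c, Km (a + τ) (extC j r τ) (extC j r (τ + 1)) := by
      refine Finset.prod_congr rfl (fun τ hτ => ?_)
      rw [Finset.mem_range] at hτ
      simp only []
      rw [glue_extC s a c h j l r (by omega : τ ≤ c)]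
      rw [show a + τ + 1 = a + (τ + 1) from rfl,
        glue_extC s a c h j l r (by omega : τ + 1 ≤ c)]
    have UA : (∏ τ ∈ Finset.range a,
        u τ ((fun m => if hm : m < s then glue s a c h j l r ⟨m, hm⟩ else j) τ))
        = ∏ τ ∈ Finset.range a, u τ (extL l j τ) := by
      refine Finset.prod_congr rfl (fun τ hτ => ?_)
      rw [Finset.mem_range] at hτ
      simp only []
      rw [glue_extL s a c h j l r (by omega : τ ≤ a)]
    have UC : (∏ τ ∈ Finset.range c,
        u (a + (τ + 1)) ((fun m => if hm : m < s then glue s a c h j l r ⟨m, hm⟩ else j)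
          (a + (τ + 1))))
        = ∏ τ ∈ Finset.range c, u (a + τ + 1) (extC j r (τ + 1)) := by
      refine Finset.prod_congr rfl (fun τ hτ => ?_)
      rw [Finset.mem_range] at hτ
      simp only []
      rw [glue_extC s a c h j l r (by omega : τ + 1 ≤ c)]
      rfl
    have U0 : u (a + 0) ((fun m => if hm : m < s then glue s a c h j l r ⟨m, hm⟩ else j) (a + 0))
        = u a j := by
      simp only []
      rw [glue_extC s a c h j l r (Nat.zero_le c), extC_zero]
      rfl
    rw [KA, KC, UA, UC, U0]
    rw [Finset.prod_mul_distrib, Finset.prod_mul_distrib]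
    ring
  -- Step C: factor the double sum
  calc (∑ l : Fin a → Fin n, ∑ r : Fin c → Fin n,
        pathK s Km (glue s a c h j l r) * rankOne s u (glue s a c h j l r))
      = ∑ l : Fin a → Fin n, ∑ r : Fin c → Fin n,
          (∏ τ ∈ Finset.range a,
            (u τ (extL l j τ) * Km τ (extL l j τ) (extL l j (τ + 1))))
          * (u a j *
            ∏ τ ∈ Finset.range c,
              (Km (a + τ) (extC j r τ) (extC j r (τ + 1)) *
                u (a + τ + 1) (extC j r (τ + 1)))) :=
        Finset.sum_congr rfl (fun l _ => Finset.sum_congr rfl (fun r _ => hB l r))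
    _ = (∑ l : Fin a → Fin n, ∏ τ ∈ Finset.range a,
          (u τ (extL l j τ) * Km τ (extL l j τ) (extL l j (τ + 1))))
        * (u a j * ∑ r : Fin c → Fin n,
            ∏ τ ∈ Finset.range c,
              (Km (a + τ) (extC j r τ) (extC j r (τ + 1)) *
                u (a + τ + 1) (extC j r (τ + 1)))) := by
        simp only [← Finset.mul_sum]
        rw [← Finset.sum_mul]
    _ = Lvec Km u a j * (u a j * Rvec s Km u a j) := by
        rw [Lsum Km u a j, Rsum Km u s c a h j]
    _ = Lvec Km u a j * u a j * Rvec s Km u a j := by ring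

/-- for every `σ`, the `σ`-th marginal projection of `K ⊙ U` is
`L_σ ⊙ u_σ ⊙ R_σ`, componentwise. -/
theorem proj_pathK_rankOne_eq
    {n s : ℕ} (hn : 1 ≤ n) (hs : 2 ≤ s)
    (Km : ℕ → Matrix (Fin n) (Fin n) ℝ)
    (hKm : ∀ σ, σ < s - 1 → ∀ a b, 0 < Km σ a b)
    (u : ℕ → Fin n → ℝ)
    (hu : ∀ σ, σ < s → ∀ j, 0 < u σ j)
    (σ : Fin s) (j : Fin n) :
    proj (fun i => pathK s Km i * rankOne s u i) σ j
      = Lvec Km u σ.1 j * u σ.1 j * Rvec s Km u σ.1 j := by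
  have h : σ.1 + (s - 1 - σ.1) + 1 = s := by have := σ.isLt; omega
  have H := main_aux Km u s σ.1 (s - 1 - σ.1) h j
  unfold proj
  exact H
end

section
/- Let K be the path-structured kernel tensor built from matrices K^1,…,K^{s−1} and let U be the rank-one tensor built from vectors u_1,…,u_s, and let K⊙U denote their entrywise product. For 1 ≤ σ₁ < σ₂ ≤ s, define the matrices B^{σ₁,σ₂} ∈ ℝ^{n×n} recursively by B^{σ₁,σ₁+1} = K^{σ₁} and B^{σ₁,σ+1} = B^{σ₁,σ} diag(u_σ) K^{σ} for σ₁+1 ≤ σ ≤ s−1. Then the pairwise projection satisfies proj_{σ₁,σ₂}(K⊙U) = diag(L_{σ₁} ⊙ u_{σ₁}) B^{σ₁,σ₂} diag(u_{σ₂} ⊙ R_{σ₂}), i.e., componentwise, proj_{σ₁,σ₂}(K⊙U)_{j,ℓ} = (L_{σ₁})_j (u_{σ₁})_j B^{σ₁,σ₂}_{j,ℓ} (u_{σ₂})_ℓ (R_{σ₂})_ℓ for all j, ℓ ∈ {1,…,n}. -/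
open Finset Matrix

/-- Pairwise marginal projection of an order-`s` tensor. -/
noncomputable def proj2 {n s : ℕ} (M : (Fin s → Fin n) → ℝ) (σ₁ σ₂ : Fin s) :
    Fin n → Fin n → ℝ :=
  fun j ℓ => ∑ i : Fin s → Fin n, if i σ₁ = j ∧ i σ₂ = ℓ then M i else 0

/-- Matrices `B^{σ₁,σ₂}` (0-indexed): `B^{σ₁,σ₁+1} = K^{σ₁}` and
`B^{σ₁,σ+1} = B^{σ₁,σ} diag(u_σ) K^σ` for `σ > σ₁`. -/
noncomputable def Bmat {n : ℕ} (Km : ℕ → Matrix (Fin n) (Fin n) ℝ) (u : ℕ → Fin n → ℝ)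
    (σ₁ : ℕ) : ℕ → Matrix (Fin n) (Fin n) ℝ
  | 0 => 1
  | σ + 1 => if σ = σ₁ then Km σ₁ else Bmat Km u σ₁ σ * Matrix.diagonal (u σ) * Km σ

/- ### Auxiliary machinery -/

lemma Rvec_eq {n : ℕ} (s : ℕ) (Km : ℕ → Matrix (Fin n) (Fin n) ℝ) (u : ℕ → Fin n → ℝ) (σ : ℕ) :
    Rvec s Km u σ = if σ < s - 1 then Km σ *ᵥ (u (σ + 1) * Rvec s Km u (σ + 1)) else 1 := by
  rw [Rvec]; split <;> simp_all

/-- Chain vector: `Svec K v m = v 0 ⊙ (K 0 (v 1 ⊙ (K 1 (⋯ (v m)))))`. -/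
noncomputable def Svec {n : ℕ} : (ℕ → Matrix (Fin n) (Fin n) ℝ) → (ℕ → Fin n → ℝ) → ℕ → Fin n → ℝ
  | _K, v, 0 => v 0
  | K, v, m+1 => v 0 * (K 0 *ᵥ Svec (fun t => K (t+1)) (fun t => v (t+1)) m)

lemma chain {n : ℕ} (m : ℕ) (K : ℕ → Matrix (Fin n) (Fin n) ℝ) (v : ℕ → Fin n → ℝ) (x : Fin n) :
    ∑ i : Fin (m+1) → Fin n, (if i 0 = x then
      (∏ σ : Fin m, K σ.1 (i σ.castSucc) (i σ.succ)) * ∏ σ : Fin (m+1), v σ.1 (i σ) else 0)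
    = Svec K v m x := by
  induction m generalizing K v x with
  | zero =>
    rw [← (Equiv.funUnique (Fin 1) (Fin n)).symm.sum_comp]
    simp [Svec, Finset.sum_ite_eq']
  | succ m ih =>
    rw [← (Fin.consEquiv (fun _ : Fin (m+2) => Fin n)).sum_comp, Fintype.sum_prod_type]
    simp only [Fin.consEquiv, Equiv.coe_fn_mk, Fin.cons_zero]
    have h1 : ∀ x1 : Fin n, (∑ x2 : Fin (m+1) → Fin n, if x1 = x then
        (∏ σ : Fin (m+1), K σ.1 ((Fin.cons x1 x2 : Fin (m+2) → Fin n) σ.castSucc) ((Fin.cons x1 x2 : Fin (m+2) → Fin n) σ.succ)) *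
          ∏ σ : Fin (m+2), v σ.1 ((Fin.cons x1 x2 : Fin (m+2) → Fin n) σ) else 0)
        = if x1 = x then (∑ x2 : Fin (m+1) → Fin n,
        (∏ σ : Fin (m+1), K σ.1 ((Fin.cons x1 x2 : Fin (m+2) → Fin n) σ.castSucc) ((Fin.cons x1 x2 : Fin (m+2) → Fin n) σ.succ)) *
          ∏ σ : Fin (m+2), v σ.1 ((Fin.cons x1 x2 : Fin (m+2) → Fin n) σ)) else 0 := by
      intro x1; split <;> simp
    simp only [h1]
    rw [Finset.sum_ite_eq' Finset.univ x]
    simp only [Finset.mem_univ, if_pos]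
    have h2 : ∀ x2 : Fin (m+1) → Fin n,
        ((∏ σ : Fin (m+1), K σ.1 ((Fin.cons x x2 : Fin (m+2) → Fin n) σ.castSucc) ((Fin.cons x x2 : Fin (m+2) → Fin n) σ.succ)) *
          ∏ σ : Fin (m+2), v σ.1 ((Fin.cons x x2 : Fin (m+2) → Fin n) σ))
        = ∑ z : Fin n, (if x2 0 = z then v 0 x * (K 0 x z *
            ((∏ σ : Fin m, K (σ.1+1) (x2 σ.castSucc) (x2 σ.succ)) *
              ∏ σ : Fin (m+1), v (σ.1+1) (x2 σ))) else 0) := by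
      intro x2
      rw [Finset.sum_ite_eq Finset.univ (x2 0)]
      simp only [Finset.mem_univ, if_pos]
      rw [Fin.prod_univ_succ, Fin.prod_univ_succ]
      simp only [Fin.cons_zero, Fin.castSucc_zero, Fin.cons_succ, Fin.val_succ,
        ← Fin.succ_castSucc, Fin.succ_zero_eq_one]
      have : (Fin.cons x x2 : Fin (m+2) → Fin n) 1 = x2 0 := rfl
      rw [this]
      simp only [Fin.val_zero]
      ring
    simp only [h2]
    rw [Finset.sum_comm]
    have h3 : ∀ z : Fin n, (∑ x2 : Fin (m+1) → Fin n, if x2 0 = z then v 0 x * (K 0 x z *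
            ((∏ σ : Fin m, K (σ.1+1) (x2 σ.castSucc) (x2 σ.succ)) *
              ∏ σ : Fin (m+1), v (σ.1+1) (x2 σ))) else 0)
        = v 0 x * (K 0 x z * Svec (fun t => K (t+1)) (fun t => v (t+1)) m z) := by
      intro z
      have hb : ∀ x2 : Fin (m+1) → Fin n, (if x2 0 = z then v 0 x * (K 0 x z *
            ((∏ σ : Fin m, K (σ.1+1) (x2 σ.castSucc) (x2 σ.succ)) *
              ∏ σ : Fin (m+1), v (σ.1+1) (x2 σ))) else 0)
          = v 0 x * (K 0 x z * (if x2 0 = z then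
            ((∏ σ : Fin m, K (σ.1+1) (x2 σ.castSucc) (x2 σ.succ)) *
              ∏ σ : Fin (m+1), v (σ.1+1) (x2 σ)) else 0)) := by
        intro x2; split <;> ring
      simp only [hb]
      rw [← Finset.mul_sum, ← Finset.mul_sum]
      have := ih (fun t => K (t+1)) (fun t => v (t+1)) z
      rw [this]
    simp only [h3]
    rw [← Finset.mul_sum]
    show _ = (v 0 * (K 0 *ᵥ Svec (fun t => K (t+1)) (fun t => v (t+1)) m)) x
    simp [mulVec, dotProduct]

lemma Svec_congr {n : ℕ} : ∀ (m : ℕ) (K K' : ℕ → Matrix (Fin n) (Fin n) ℝ)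
    (v v' : ℕ → Fin n → ℝ), (∀ t, t < m → K t = K' t) → (∀ t, t ≤ m → v t = v' t) →
    Svec K v m = Svec K' v' m
  | 0, K, K', v, v', hK, hv => by simp [Svec, hv 0 le_rfl]
  | m+1, K, K', v, v', hK, hv => by
    show v 0 * (K 0 *ᵥ _) = v' 0 * (K' 0 *ᵥ _)
    rw [hv 0 (by omega), hK 0 (by omega),
      Svec_congr m (fun t => K (t+1)) (fun t => K' (t+1)) (fun t => v (t+1)) (fun t => v' (t+1))
        (fun t ht => hK (t+1) (by omega)) (fun t ht => hv (t+1) (by omega))]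

lemma claimA {n : ℕ} (m : ℕ) (Km : ℕ → Matrix (Fin n) (Fin n) ℝ) (u : ℕ → Fin n → ℝ) :
    ∀ (k σ : ℕ), σ + k = m →
      Svec (fun t => Km (σ + t)) (fun t => u (σ + t)) k = u σ * Rvec (m+1) Km u σ := by
  intro k
  induction k with
  | zero =>
    intro σ hσ
    have : Rvec (m+1) Km u σ = 1 := by rw [Rvec_eq]; simp; omega
    simp [Svec, this]
  | succ k ih =>
    intro σ hσ
    show (fun t => u (σ + t)) 0 * ((fun t => Km (σ + t)) 0 *ᵥ
        Svec (fun t => Km (σ + (t+1))) (fun t => u (σ + (t+1))) k) = _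
    have e1 : (fun t => Km (σ + (t+1))) = fun t => Km ((σ+1) + t) := by
      funext t; exact congrArg Km (by omega)
    have e2 : (fun t => u (σ + (t+1))) = fun t => u ((σ+1) + t) := by
      funext t; exact congrArg u (by omega)
    rw [e1, e2, ih (σ+1) (by omega)]
    have hR : Rvec (m+1) Km u σ = Km σ *ᵥ (u (σ+1) * Rvec (m+1) Km u (σ+1)) := by
      rw [Rvec_eq]; simp only [Nat.add_sub_cancel]; rw [if_pos (by omega)]
    rw [hR]; simp

lemma claimB {n : ℕ} (m σ₂ : ℕ) (hσ₂ : σ₂ ≤ m) (Km : ℕ → Matrix (Fin n) (Fin n) ℝ)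
    (u : ℕ → Fin n → ℝ) (ℓ : Fin n) (v : ℕ → Fin n → ℝ)
    (hv2 : v σ₂ = fun y => if y = ℓ then u σ₂ y else 0)
    (hv1 : ∀ t, σ₂ < t → v t = u t) :
    Svec (fun t => Km (σ₂ + t)) (fun t => v (σ₂ + t)) (m - σ₂)
      = fun x => if x = ℓ then u σ₂ ℓ * Rvec (m+1) Km u σ₂ ℓ else 0 := by
  rcases eq_or_lt_of_le hσ₂ with h | h
  · subst h
    have h0 : σ₂ - σ₂ = 0 := by omega
    rw [h0]
    have hR : Rvec (σ₂+1) Km u σ₂ = 1 := by rw [Rvec_eq]; simp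
    show (fun t => v (σ₂ + t)) 0 = _
    simp only [Nat.add_zero, hv2, hR]
    funext x
    split <;> simp_all
  · obtain ⟨k, hk⟩ : ∃ k, m - σ₂ = k + 1 := ⟨m - σ₂ - 1, by omega⟩
    rw [hk]
    show (fun t => v (σ₂ + t)) 0 * ((fun t => Km (σ₂ + t)) 0 *ᵥ
        Svec (fun t => Km (σ₂ + (t+1))) (fun t => v (σ₂ + (t+1))) k) = _
    have e1 : (fun t => Km (σ₂ + (t+1))) = fun t => Km ((σ₂+1) + t) := by
      funext t; exact congrArg Km (by omega)
    have e2 : (fun t => v (σ₂ + (t+1))) = fun t => v ((σ₂+1) + t) := by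
      funext t; exact congrArg v (by omega)
    rw [e1, e2, Svec_congr k _ (fun t => Km ((σ₂+1) + t)) _ (fun t => u ((σ₂+1) + t))
      (fun t _ => rfl) (fun t _ => hv1 _ (by omega)), claimA m Km u k (σ₂+1) (by omega)]
    have hR : Rvec (m+1) Km u σ₂ = Km σ₂ *ᵥ (u (σ₂+1) * Rvec (m+1) Km u (σ₂+1)) := by
      rw [Rvec_eq]; simp only [Nat.add_sub_cancel]; rw [if_pos (by omega)]
    simp only [Nat.add_zero, hv2, hR]
    funext x
    split <;> simp_all

lemma Bmat_left {n : ℕ} (Km : ℕ → Matrix (Fin n) (Fin n) ℝ) (u : ℕ → Fin n → ℝ) :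
    ∀ b σ, σ + 1 < b →
      Bmat Km u σ b = Km σ * Matrix.diagonal (u (σ+1)) * Bmat Km u (σ+1) b := by
  intro b
  induction b with
  | zero => omega
  | succ b ihb =>
    intro σ h
    have hbσ : b ≠ σ := by omega
    rcases eq_or_lt_of_le (show σ + 1 ≤ b by omega) with hb | hb
    · subst hb
      have h1 : Bmat Km u σ (σ+1+1) = Bmat Km u σ (σ+1) * Matrix.diagonal (u (σ+1)) * Km (σ+1) := by
        simp [Bmat, hbσ]
      have h2 : Bmat Km u σ (σ+1) = Km σ := by simp [Bmat]
      have h3 : Bmat Km u (σ+1) (σ+1+1) = Km (σ+1) := by simp [Bmat]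
      rw [h1, h2, h3]
    · rw [show Bmat Km u σ (b+1) = Bmat Km u σ b * Matrix.diagonal (u b) * Km b from by
          simp [Bmat, hbσ],
        show Bmat Km u (σ+1) (b+1) = Bmat Km u (σ+1) b * Matrix.diagonal (u b) * Km b from by
          simp [Bmat, show b ≠ σ + 1 by omega],
        ihb σ (by omega)]
      simp only [Matrix.mul_assoc]

lemma claimC {n : ℕ} (m σ₂ : ℕ) (hσ₂ : σ₂ ≤ m) (Km : ℕ → Matrix (Fin n) (Fin n) ℝ)
    (u : ℕ → Fin n → ℝ) (ℓ : Fin n) (v : ℕ → Fin n → ℝ)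
    (hv2 : v σ₂ = fun y => if y = ℓ then u σ₂ y else 0)
    (hv1 : ∀ t, σ₂ < t → v t = u t) :
    ∀ (k σ : ℕ), σ + k = σ₂ → 0 < k → (∀ t, σ < t → t < σ₂ → v t = u t) →
      Svec (fun t => Km (σ + t)) (fun t => v (σ + t)) (m - σ)
        = fun x => v σ x * (Bmat Km u σ σ₂ x ℓ * (u σ₂ ℓ * Rvec (m+1) Km u σ₂ ℓ)) := by
  intro k
  induction k with
  | zero => omega
  | succ k ih =>
    intro σ hσ _ hmid
    have hσm : σ < m := by omega
    obtain ⟨k', hk'⟩ : ∃ k', m - σ = k' + 1 := ⟨m - σ - 1, by omega⟩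
    rw [hk']
    show (fun t => v (σ + t)) 0 * ((fun t => Km (σ + t)) 0 *ᵥ
        Svec (fun t => Km (σ + (t+1))) (fun t => v (σ + (t+1))) k') = _
    have e1 : (fun t => Km (σ + (t+1))) = fun t => Km ((σ+1) + t) := by
      funext t; exact congrArg Km (by omega)
    have e2 : (fun t => v (σ + (t+1))) = fun t => v ((σ+1) + t) := by
      funext t; exact congrArg v (by omega)
    have hk'' : k' = m - (σ+1) := by omega
    rw [e1, e2, hk'']
    rcases Nat.eq_zero_or_pos k with hk0 | hk0
    · have hσσ : σ + 1 = σ₂ := by omega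
      rw [show (σ:ℕ)+1 = σ₂ from hσσ, claimB m σ₂ hσ₂ Km u ℓ v hv2 hv1]
      funext x
      have hB : Bmat Km u σ σ₂ = Km σ := by
        rw [← hσσ]; simp [Bmat]
      rw [hB]
      simp only [Nat.add_zero, Pi.mul_apply, mulVec, dotProduct]
      rw [Finset.sum_eq_single ℓ (by intro b _ hb; simp [hb]) (by simp)]
      simp [mul_assoc]
    · rw [ih (σ+1) (by omega) hk0 (fun t ht1 ht2 => hmid t (by omega) ht2)]
      have hv1' : v (σ+1) = u (σ+1) := hmid (σ+1) (by omega) (by omega)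
      funext x
      simp only [Nat.add_zero, Pi.mul_apply, mulVec, dotProduct, hv1']
      rw [Bmat_left Km u σ₂ σ (by omega), Matrix.mul_apply, Finset.sum_mul, Finset.mul_sum,
        Finset.mul_sum]
      refine Finset.sum_congr rfl fun y _ => ?_
      rw [Matrix.mul_diagonal]
      ring

lemma claimD {n : ℕ} (m σ₁ : ℕ) (Km : ℕ → Matrix (Fin n) (Fin n) ℝ)
    (u : ℕ → Fin n → ℝ) (v : ℕ → Fin n → ℝ)
    (hσ₁ : σ₁ ≤ m) (hv : ∀ t, t < σ₁ → v t = u t) :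
    ∀ σ, σ ≤ σ₁ → ∑ x, Svec Km v m x
      = ∑ x, Lvec Km u σ x * Svec (fun t => Km (σ + t)) (fun t => v (σ + t)) (m - σ) x := by
  intro σ
  induction σ with
  | zero =>
    intro _
    have e1 : (fun t => Km (0 + t)) = Km := by funext t; exact congrArg Km (by omega)
    have e2 : (fun t => v (0 + t)) = v := by funext t; exact congrArg v (by omega)
    simp [e1, e2, Lvec]
  | succ σ ihσ =>
    intro hσ
    rw [ihσ (by omega)]
    have hσm : σ < m := by omega
    obtain ⟨k', hk'⟩ : ∃ k', m - σ = k' + 1 := ⟨m - σ - 1, by omega⟩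
    rw [hk']
    have e1 : (fun t => Km (σ + (t+1))) = fun t => Km ((σ+1) + t) := by
      funext t; exact congrArg Km (by omega)
    have e2 : (fun t => v (σ + (t+1))) = fun t => v ((σ+1) + t) := by
      funext t; exact congrArg v (by omega)
    have hk'' : k' = m - (σ+1) := by omega
    have hvσ : v σ = u σ := hv σ (by omega)
    have step : ∀ x, Lvec Km u σ x * Svec (fun t => Km (σ + t)) (fun t => v (σ + t)) (k'+1) x
        = ∑ y, Lvec Km u σ x * u σ x * Km σ x y *
            Svec (fun t => Km ((σ+1) + t)) (fun t => v ((σ+1) + t)) (m - (σ+1)) y := by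
      intro x
      show Lvec Km u σ x * (((fun t => v (σ + t)) 0 * ((fun t => Km (σ + t)) 0 *ᵥ
          Svec (fun t => Km (σ + (t+1))) (fun t => v (σ + (t+1))) k')) x) = _
      rw [e1, e2, hk'']
      simp only [Nat.add_zero, hvσ, Pi.mul_apply, mulVec, dotProduct, Finset.mul_sum]
      congr 1; funext y; ring
    simp only [step]
    rw [Finset.sum_comm]
    refine Finset.sum_congr rfl fun y _ => ?_
    have hL : Lvec Km u (σ+1) y = ∑ x, Km σ x y * (u σ x * Lvec Km u σ x) := by
      show ((Km σ)ᵀ *ᵥ (u σ * Lvec Km u σ)) y = _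
      simp only [mulVec, dotProduct, Matrix.transpose_apply, Pi.mul_apply]
    rw [hL, Finset.sum_mul]
    refine Finset.sum_congr rfl fun x _ => ?_
    ring

/-- the pairwise projection of `K ⊙ U` satisfies
`proj_{σ₁,σ₂}(K⊙U) = diag(L_{σ₁} ⊙ u_{σ₁}) B^{σ₁,σ₂} diag(u_{σ₂} ⊙ R_{σ₂})`, componentwise. -/
theorem proj2_pathK_rankOne_eq
    {n s : ℕ} (hn : 1 ≤ n) (hs : 2 ≤ s)
    (Km : ℕ → Matrix (Fin n) (Fin n) ℝ)
    (hKm : ∀ σ, σ < s - 1 → ∀ a b, 0 < Km σ a b)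
    (u : ℕ → Fin n → ℝ)
    (hu : ∀ σ, σ < s → ∀ j, 0 < u σ j)
    (σ₁ σ₂ : Fin s) (hσ : σ₁ < σ₂) (j ℓ : Fin n) :
    proj2 (fun i => pathK s Km i * rankOne s u i) σ₁ σ₂ j ℓ
      = Lvec Km u σ₁.1 j * u σ₁.1 j * Bmat Km u σ₁.1 σ₂.1 j ℓ
          * (u σ₂.1 ℓ * Rvec s Km u σ₂.1 ℓ) := by
  obtain ⟨m, rfl⟩ : ∃ m, s = m + 1 := ⟨s - 1, by omega⟩
  have hab : σ₁.1 < σ₂.1 := hσ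
  have hbm : σ₂.1 ≤ m := by have := σ₂.isLt; omega
  set a := σ₁.1 with ha
  set b := σ₂.1 with hb
  set v : ℕ → Fin n → ℝ := fun t => if t = a then (fun y => if y = j then u t y else 0)
    else if t = b then (fun y => if y = ℓ then u t y else 0) else u t with hv
  have hpath : ∀ i : Fin (m+1) → Fin n,
      pathK (m+1) Km i = ∏ σ : Fin m, Km σ.1 (i σ.castSucc) (i σ.succ) := fun _ => rfl
  have e1 : ∀ i : Fin (m+1) → Fin n, (if i σ₁ = j ∧ i σ₂ = ℓ
      then pathK (m+1) Km i * rankOne (m+1) u i else 0)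
      = (∏ σ : Fin m, Km σ.1 (i σ.castSucc) (i σ.succ)) * ∏ σ : Fin (m+1), v σ.1 (i σ) := by
    intro i
    by_cases hc : i σ₁ = j ∧ i σ₂ = ℓ
    · rw [if_pos hc, hpath i]
      congr 1
      unfold rankOne
      refine Finset.prod_congr rfl fun σ _ => ?_
      by_cases h1 : σ.1 = a
      · have hσ1 : σ = σ₁ := Fin.ext h1
        simp [hv, h1, hσ1, hc.1, ← ha]
      · by_cases h2 : σ.1 = b
        · have hσ2 : σ = σ₂ := Fin.ext h2
          simp [hv, h1, h2, hσ2, hc.2, show (σ₂.1 : ℕ) ≠ a by omega, ← hb, show b ≠ a by omega]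
        · simp [hv, h1, h2]
    · rw [if_neg hc]
      symm
      apply mul_eq_zero_of_right
      rcases not_and_or.mp hc with h1 | h2
      · exact Finset.prod_eq_zero (Finset.mem_univ σ₁) (by simp [hv, h1, ← ha])
      · exact Finset.prod_eq_zero (Finset.mem_univ σ₂)
          (by simp [hv, h2, show b ≠ a by omega, ← ha, ← hb])
  have e2 : proj2 (fun i => pathK (m+1) Km i * rankOne (m+1) u i) σ₁ σ₂ j ℓ
      = ∑ x : Fin n, Svec Km v m x := by
    unfold proj2
    simp only [e1]
    calc (∑ i : Fin (m+1) → Fin n,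
          (∏ σ : Fin m, Km σ.1 (i σ.castSucc) (i σ.succ)) * ∏ σ : Fin (m+1), v σ.1 (i σ))
        = ∑ i : Fin (m+1) → Fin n, ∑ x : Fin n, (if i 0 = x then
          (∏ σ : Fin m, Km σ.1 (i σ.castSucc) (i σ.succ)) * ∏ σ : Fin (m+1), v σ.1 (i σ) else 0) := by
          refine Finset.sum_congr rfl fun i _ => ?_
          rw [Finset.sum_ite_eq Finset.univ (i 0)]
          simp
      _ = ∑ x : Fin n, ∑ i : Fin (m+1) → Fin n, (if i 0 = x then
          (∏ σ : Fin m, Km σ.1 (i σ.castSucc) (i σ.succ)) * ∏ σ : Fin (m+1), v σ.1 (i σ) else 0) :=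
          Finset.sum_comm
      _ = ∑ x : Fin n, Svec Km v m x :=
          Finset.sum_congr rfl fun x _ => chain m Km v x
  rw [e2, claimD m a Km u v (by omega) (fun t ht => by
      simp [hv, show t ≠ a by omega, show t ≠ b by omega]) a le_rfl]
  rw [claimC m b hbm Km u ℓ v (by simp [hv, show b ≠ a by omega])
      (fun t ht => by simp [hv, show t ≠ a by omega, show t ≠ b by omega])
      (b - a) a (by omega) (by omega)
      (fun t ht1 ht2 => by simp [hv, show t ≠ a by omega, show t ≠ b by omega])]
  rw [Finset.sum_eq_single j
    (by intro x _ hx; simp [hv, hx])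
    (by simp)]
  simp [hv]
  ring
end

section
/- Let K be the path-structured kernel tensor built from matrices K^1,…,K^{s−1}, let U be the rank-one tensor built from vectors u_1,…,u_s with strictly positive entries, and let μ_σ ∈ ℝ^n for σ ∈ {1,…,s}. Then for every σ ∈ {1,…,s}, the multimarginal Sinkhorn update satisfies u_σ ⊙ μ_σ ⊘ proj_σ(K⊙U) = μ_σ ⊘ (L_σ ⊙ R_σ), where ⊘ denotes entrywise division; in particular, the updated value of u_σ does not depend on the current value of u_σ. -/
open Finset Matrix

/-! Summing `K ⊙ U` over all indices but `i_σ` is message passing on a path: the sum over the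
indices before `σ` is computed by the forward recursion for `L` and the sum over the indices
after `σ` by the backward recursion for `R`, so `proj_σ(K ⊙ U) = u_σ ⊙ L_σ ⊙ R_σ` and the factor
`u_σ` cancels. Formally, summing out the first index of an order-`(m + 2)` tensor of this shape
gives one of order `m + 1` of the same shape, with `(K^1)ᵀ u_1 = L_2` absorbed into `u_2`. -/

theorem Fintype.sum_pi_fin_succ {α M : Type*} [Fintype α] [AddCommMonoid M] {m : ℕ}
    (F : (Fin (m + 1) → α) → M) :
    ∑ i, F i = ∑ a, ∑ i', F (Fin.cons a i') := by
  rw [← (Fin.consEquiv fun _ => α).sum_comp, Fintype.sum_prod_type]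
  rfl

section Proj

variable {n m : ℕ}

theorem proj_zero (M : (Fin (m + 1) → Fin n) → ℝ) (j : Fin n) :
    proj M 0 j = ∑ i', M (Fin.cons j i') := by
  simp [proj, Fintype.sum_pi_fin_succ]

theorem proj_succ (M : (Fin (m + 1) → Fin n) → ℝ) (σ : Fin m) (j : Fin n) :
    proj M σ.succ j = proj (fun i' => ∑ a, M (Fin.cons a i')) σ j := by
  simp only [proj, Fintype.sum_pi_fin_succ, Fin.cons_succ]
  rw [Finset.sum_comm]
  simp only [Finset.sum_ite_irrel, Finset.sum_const_zero]

theorem sum_mul_eq_sum_mul_proj (M : (Fin m → Fin n) → ℝ) (σ : Fin m) (f : Fin n → ℝ) :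
    ∑ i, f (i σ) * M i = ∑ b, f b * proj M σ b := by
  simp only [proj, Finset.mul_sum, mul_ite, mul_zero]
  rw [Finset.sum_comm]
  exact Finset.sum_congr rfl fun i _ => by simp

end Proj

section PathTensor

variable {n : ℕ}

/-- The tensor `K ⊙ U`. -/
noncomputable def scaledPathK (s : ℕ) (Km : ℕ → Matrix (Fin n) (Fin n) ℝ) (u : ℕ → Fin n → ℝ) :
    (Fin s → Fin n) → ℝ :=
  fun i => pathK s Km i * rankOne s u i

theorem pathK_one (Km : ℕ → Matrix (Fin n) (Fin n) ℝ) (i : Fin 1 → Fin n) : pathK 1 Km i = 1 :=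
  Finset.prod_eq_one fun x _ => x.elim0

theorem pathK_succ_succ (m : ℕ) (Km : ℕ → Matrix (Fin n) (Fin n) ℝ) (i : Fin (m + 2) → Fin n) :
    pathK (m + 2) Km i = Km 0 (i 0) (i 1) * pathK (m + 1) (fun t => Km (t + 1)) (Fin.tail i) :=
  Fin.prod_univ_succ _

theorem rankOne_succ (m : ℕ) (u : ℕ → Fin n → ℝ) (i : Fin (m + 1) → Fin n) :
    rankOne (m + 1) u i = u 0 (i 0) * rankOne m (fun t => u (t + 1)) (Fin.tail i) :=
  Fin.prod_univ_succ _

theorem rankOne_eq_mul_of_scale_zero {m : ℕ} {u u' : ℕ → Fin n → ℝ} (c : Fin n → ℝ)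
    (h0 : u' 0 = c * u 0) (hsucc : ∀ t, u' (t + 1) = u (t + 1)) (i : Fin (m + 1) → Fin n) :
    rankOne (m + 1) u' i = c (i 0) * rankOne (m + 1) u i := by
  rw [rankOne_succ, rankOne_succ, h0, funext hsucc, Pi.mul_apply, mul_assoc]

theorem scaledPathK_one (Km : ℕ → Matrix (Fin n) (Fin n) ℝ) (u : ℕ → Fin n → ℝ)
    (i : Fin 1 → Fin n) : scaledPathK 1 Km u i = u 0 (i 0) := by
  simp [scaledPathK, pathK_one, rankOne]

theorem scaledPathK_cons (m : ℕ) (Km : ℕ → Matrix (Fin n) (Fin n) ℝ) (u : ℕ → Fin n → ℝ)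
    (a : Fin n) (i' : Fin (m + 1) → Fin n) :
    scaledPathK (m + 2) Km u (Fin.cons a i') =
      u 0 a * Km 0 a (i' 0) * scaledPathK (m + 1) (fun t => Km (t + 1)) (fun t => u (t + 1)) i' := by
  simp only [scaledPathK, pathK_succ_succ, rankOne_succ (m + 1), Fin.tail_cons, Fin.cons_zero]
  rw [show (Fin.cons a i' : Fin (m + 2) → Fin n) 1 = i' 0 from Fin.cons_succ _ _ 0]
  ring

end PathTensor

section Messages

variable {n : ℕ} {Km : ℕ → Matrix (Fin n) (Fin n) ℝ} {u u' : ℕ → Fin n → ℝ}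

theorem Lvec_one_apply (b : Fin n) : Lvec Km u 1 b = ∑ a, u 0 a * Km 0 a b := by
  simp [Lvec, Matrix.mulVec_transpose, Matrix.vecMul, dotProduct]

theorem mul_Lvec_shift (h0 : u' 0 = u 1 * Lvec Km u 1) (hsucc : ∀ t, u' (t + 1) = u (t + 2))
    (τ : ℕ) : u' τ * Lvec (fun t => Km (t + 1)) u' τ = u (τ + 1) * Lvec Km u (τ + 1) := by
  induction τ with
  | zero => simp [Lvec, h0]
  | succ τ ih => rw [hsucc, Lvec, ih, ← Lvec]

theorem Rvec_of_lt {s σ : ℕ} (h : σ < s - 1) :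
    Rvec s Km u σ = Km σ *ᵥ (u (σ + 1) * Rvec s Km u (σ + 1)) := by
  rw [Rvec, dif_pos h]

theorem Rvec_of_le {s σ : ℕ} (h : s - 1 ≤ σ) : Rvec s Km u σ = 1 := by
  rw [Rvec, dif_neg (by omega)]

theorem Rvec_shift (hsucc : ∀ t, u' (t + 1) = u (t + 2)) (s σ : ℕ) :
    Rvec s (fun t => Km (t + 1)) u' σ = Rvec (s + 1) Km u (σ + 1) := by
  by_cases h : σ < s - 1
  · rw [Rvec_of_lt h, Rvec_of_lt (s := s + 1) (σ := σ + 1) (by omega), hsucc,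
      Rvec_shift hsucc s (σ + 1)]
  · rw [Rvec_of_le (by omega), Rvec_of_le (by omega)]
termination_by s - 1 - σ

end Messages

section Marginals

variable {n : ℕ}

theorem proj_scaledPathK_zero (m : ℕ) (Km : ℕ → Matrix (Fin n) (Fin n) ℝ)
    (u : ℕ → Fin n → ℝ) (j : Fin n) :
    proj (scaledPathK (m + 1) Km u) 0 j = u 0 j * Rvec (m + 1) Km u 0 j := by
  induction m generalizing Km u j with
  | zero => simp [proj_zero, scaledPathK_one, Rvec_of_le]
  | succ m ih =>
    calc proj (scaledPathK (m + 2) Km u) 0 j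
        = u 0 j * ∑ b, Km 0 j b * proj (scaledPathK (m + 1) (fun t => Km (t + 1))
            (fun t => u (t + 1))) 0 b := by
          simp only [proj_zero, scaledPathK_cons, mul_assoc, ← Finset.mul_sum,
            sum_mul_eq_sum_mul_proj]
      _ = u 0 j * Rvec (m + 2) Km u 0 j := by
          simp only [ih, Rvec_shift (u := u) (u' := fun t => u (t + 1)) (fun _ => rfl),
            Rvec_of_lt (show 0 < m + 2 - 1 by omega), Matrix.mulVec, dotProduct, Pi.mul_apply]

theorem proj_scaledPathK_succ {m : ℕ} {Km : ℕ → Matrix (Fin n) (Fin n) ℝ} {u u' : ℕ → Fin n → ℝ}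
    (h0 : u' 0 = u 1 * Lvec Km u 1) (hsucc : ∀ t, u' (t + 1) = u (t + 2))
    (σ : Fin (m + 1)) (j : Fin n) :
    proj (scaledPathK (m + 2) Km u) σ.succ j =
      proj (scaledPathK (m + 1) (fun t => Km (t + 1)) u') σ j := by
  rw [proj_succ]
  refine congrArg (fun M => proj M σ j) (funext fun i' => ?_)
  have hu' : u' 0 = Lvec Km u 1 * (fun t => u (t + 1)) 0 := by rw [h0, mul_comm]
  simp only [scaledPathK_cons, ← Finset.sum_mul, ← Lvec_one_apply]
  simp only [scaledPathK, rankOne_eq_mul_of_scale_zero (u := fun t => u (t + 1)) _ hu' hsucc]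
  ring

theorem proj_scaledPathK (s : ℕ) (Km : ℕ → Matrix (Fin n) (Fin n) ℝ) (u : ℕ → Fin n → ℝ)
    (σ : Fin s) (j : Fin n) :
    proj (scaledPathK s Km u) σ j = u σ j * (Lvec Km u σ j * Rvec s Km u σ j) := by
  induction σ using Fin.succRecOn generalizing Km u with
  | zero m => simp [proj_scaledPathK_zero, Lvec]
  | succ m σ ih =>
    cases m with
    | zero => exact σ.elim0
    | succ m =>
      let u' : ℕ → Fin n → ℝ := fun | 0 => u 1 * Lvec Km u 1 | t + 1 => u (t + 2)
      rw [proj_scaledPathK_succ (u' := u') rfl (fun _ => rfl), ih, ← mul_assoc,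
        ← Pi.mul_apply (u' σ), mul_Lvec_shift (u' := u') rfl (fun _ => rfl),
        Rvec_shift (u' := u') (fun _ => rfl), Fin.val_succ, Pi.mul_apply, mul_assoc]

end Marginals

theorem sinkhorn_update_simplification_general
    {n s : ℕ}
    (Km : ℕ → Matrix (Fin n) (Fin n) ℝ)
    (u : ℕ → Fin n → ℝ)
    (hu : ∀ σ, σ < s → ∀ j, 0 < u σ j)
    (μ : ℕ → Fin n → ℝ)
    (σ : Fin s) (j : Fin n) :
    u σ.1 j * μ σ.1 j / proj (fun i => pathK s Km i * rankOne s u i) σ j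
      = μ σ.1 j / (Lvec Km u σ.1 j * Rvec s Km u σ.1 j) := by
  rw [show (fun i => pathK s Km i * rankOne s u i) = scaledPathK s Km u from rfl,
    proj_scaledPathK]
  exact mul_div_mul_left _ _ (hu σ σ.2 j).ne'

/-- the multimarginal Sinkhorn update
`u_σ ⊙ μ_σ ⊘ proj_σ(K⊙U)` equals `μ_σ ⊘ (L_σ ⊙ R_σ)`; in particular the updated value
of `u_σ` does not depend on the current value of `u_σ`. -/
theorem sinkhorn_update_simplification
    {n s : ℕ} (hn : 1 ≤ n) (hs : 2 ≤ s)
    (Km : ℕ → Matrix (Fin n) (Fin n) ℝ)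
    (hKm : ∀ σ, σ < s - 1 → ∀ a b, 0 < Km σ a b)
    (u : ℕ → Fin n → ℝ)
    (hu : ∀ σ, σ < s → ∀ j, 0 < u σ j)
    (μ : ℕ → Fin n → ℝ)
    (σ : Fin s) (j : Fin n) :
    u σ.1 j * μ σ.1 j / proj (fun i => pathK s Km i * rankOne s u i) σ j
      = μ σ.1 j / (Lvec Km u σ.1 j * Rvec s Km u σ.1 j) :=
  sinkhorn_update_simplification_general Km u hu μ σ j
end

section
/- Let ε > 0, let C : {1,…,n}^s → ℝ be a cost tensor, let K(i) = exp(−C(i)/ε), and let μ_1,…,μ_s ∈ ℝ^n be probability vectors. Suppose u_1,…,u_s ∈ ℝ^n have strictly positive entries and the tensor M*(i_1,…,i_s) = K(i_1,…,i_s) ∏_{σ=1}^{s} (u_σ)_{i_σ} satisfies proj_σ(M*) = μ_σ for all σ ∈ {1,…,s}. Then M* is the unique minimizer of f(M) = Σ_i C(i)M(i) + ε Σ_i M(i) log M(i) over the feasible set F = {M | M(i) ≥ 0 for all i, and proj_σ(M) = μ_σ for all σ}: f(M) ≥ f(M*) for all M ∈ F, with equality if and only if M = M*. -/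
open Finset

/-- Discrete multimarginal Schrödinger bridge objective
`f(M) = Σ_i C(i) M(i) + ε Σ_i M(i) log M(i)`. Since `Real.log 0 = 0` in Mathlib,
the map `x ↦ x log x` is automatically extended by `0` at `x = 0`. -/
noncomputable def msbpObj {n s : ℕ} (ε : ℝ) (C : (Fin s → Fin n) → ℝ)
    (M : (Fin s → Fin n) → ℝ) : ℝ :=
  ∑ i : Fin s → Fin n, C i * M i + ε * ∑ i : Fin s → Fin n, M i * Real.log (M i)

/-- Feasible set of the discrete MSBP: entrywise nonnegative tensors whose `σ`-th marginal
projection equals `μ_σ` for every `σ`. -/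
def msbpFeasible {n s : ℕ} (μ : Fin s → Fin n → ℝ) (M : (Fin s → Fin n) → ℝ) : Prop :=
  (∀ i, 0 ≤ M i) ∧ ∀ σ : Fin s, proj M σ = μ σ

lemma ent_le {a b : ℝ} (ha : 0 ≤ a) (hb : 0 < b) :
    a - b ≤ a * (Real.log a - Real.log b) := by
  rcases ha.lt_or_eq with h | h
  · have hba : 0 < b / a := div_pos hb h
    have hlog : Real.log (b / a) ≤ b / a - 1 := Real.log_le_sub_one_of_pos hba
    rw [Real.log_div hb.ne' h.ne'] at hlog
    have := mul_le_mul_of_nonneg_left hlog h.le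
    have hba' : a * (b / a) = b := by field_simp
    nlinarith
  · simp [← h]; linarith

lemma ent_lt {a b : ℝ} (ha : 0 ≤ a) (hb : 0 < b) (hne : a ≠ b) :
    a - b < a * (Real.log a - Real.log b) := by
  rcases ha.lt_or_eq with h | h
  · have hba : 0 < b / a := div_pos hb h
    have hne1 : b / a ≠ 1 := by
      intro hc; apply hne; field_simp at hc; linarith
    have hlog : Real.log (b / a) < b / a - 1 := Real.log_lt_sub_one_of_pos hba hne1
    rw [Real.log_div hb.ne' h.ne'] at hlog
    have := mul_lt_mul_of_pos_left hlog h
    have hba' : a * (b / a) = b := by field_simp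
    nlinarith
  · simp [← h]; linarith

lemma sum_eq_sum_proj {n s : ℕ} (M : (Fin s → Fin n) → ℝ) (σ : Fin s) :
    ∑ i : Fin s → Fin n, M i = ∑ j : Fin n, proj M σ j := by
  unfold proj
  rw [Finset.sum_comm]
  simp [Finset.sum_ite_eq]

lemma sum_weight_eq {n s : ℕ} (M : (Fin s → Fin n) → ℝ) (σ : Fin s) (L : Fin n → ℝ) :
    ∑ i : Fin s → Fin n, M i * L (i σ) = ∑ j : Fin n, proj M σ j * L j := by
  unfold proj
  simp only [Finset.sum_mul, ite_mul, zero_mul]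
  rw [Finset.sum_comm]
  simp [Finset.sum_ite_eq]


/-- if `M*(i) = K(i) ∏_σ (u_σ)_{i_σ}` with `K(i) = exp(−C(i)/ε)` and positive
vectors `u_σ` satisfies all the marginal constraints, then `M*` is the unique minimizer of the
discrete MSBP objective over the feasible set. -/
theorem msbp_diagonal_scaling_is_unique_minimizer
    {n s : ℕ} (hn : 1 ≤ n) (hs : 2 ≤ s)
    (ε : ℝ) (hε : 0 < ε)
    (C : (Fin s → Fin n) → ℝ)
    (μ : Fin s → Fin n → ℝ)
    (hμ0 : ∀ σ j, 0 ≤ μ σ j)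
    (hμ1 : ∀ σ, ∑ j : Fin n, μ σ j = 1)
    (u : Fin s → Fin n → ℝ) (hu : ∀ σ j, 0 < u σ j)
    (Mstar : (Fin s → Fin n) → ℝ)
    (hMstar : Mstar = fun i => Real.exp (-C i / ε) * ∏ σ : Fin s, u σ (i σ))
    (hfeas : ∀ σ : Fin s, proj Mstar σ = μ σ) :
    (∀ M : (Fin s → Fin n) → ℝ, msbpFeasible μ M → msbpObj ε C Mstar ≤ msbpObj ε C M) ∧
    (∀ M : (Fin s → Fin n) → ℝ, msbpFeasible μ M →
      (msbpObj ε C M = msbpObj ε C Mstar ↔ M = Mstar)) := by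
  have σ₀ : Fin s := ⟨0, by omega⟩
  have hMsp : ∀ i, 0 < Mstar i := by
    intro i; rw [hMstar]
    exact mul_pos (Real.exp_pos _) (Finset.prod_pos fun σ _ => hu σ (i σ))
  have hlogstar : ∀ i, Real.log (Mstar i) = -C i / ε + ∑ σ : Fin s, Real.log (u σ (i σ)) := by
    intro i
    rw [hMstar]
    simp only
    rw [Real.log_mul (Real.exp_ne_zero _) (ne_of_gt (Finset.prod_pos fun σ _ => hu σ (i σ))),
      Real.log_exp, Real.log_prod (fun σ _ => (hu σ (i σ)).ne')]
  have hdecomp : ∀ M : (Fin s → Fin n) → ℝ,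
      msbpObj ε C M = ε * ∑ i, M i * (Real.log (M i) - Real.log (Mstar i))
        + ε * ∑ i, M i * ∑ σ : Fin s, Real.log (u σ (i σ)) := by
    intro M
    unfold msbpObj
    rw [Finset.mul_sum, Finset.mul_sum, Finset.mul_sum, ← Finset.sum_add_distrib,
      ← Finset.sum_add_distrib]
    refine Finset.sum_congr rfl fun i _ => ?_
    rw [hlogstar i]
    field_simp
    ring
  -- for feasible M, the second sum is a constant
  have hconst : ∀ M : (Fin s → Fin n) → ℝ, msbpFeasible μ M →
      ∑ i, M i * ∑ σ : Fin s, Real.log (u σ (i σ))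
        = ∑ σ : Fin s, ∑ j, μ σ j * Real.log (u σ j) := by
    intro M hM
    simp only [Finset.mul_sum]
    rw [Finset.sum_comm]
    refine Finset.sum_congr rfl fun σ _ => ?_
    rw [sum_weight_eq M σ (fun j => Real.log (u σ j)), hM.2 σ]
  have hmass : ∀ M : (Fin s → Fin n) → ℝ, msbpFeasible μ M → ∑ i, M i = 1 := by
    intro M hM
    rw [sum_eq_sum_proj M σ₀, hM.2 σ₀, hμ1 σ₀]
  have hMstarFeas : msbpFeasible μ Mstar := ⟨fun i => (hMsp i).le, hfeas⟩
  have key : ∀ M : (Fin s → Fin n) → ℝ, msbpFeasible μ M →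
      msbpObj ε C M - msbpObj ε C Mstar
        = ε * ∑ i, M i * (Real.log (M i) - Real.log (Mstar i)) := by
    intro M hM
    rw [hdecomp M, hdecomp Mstar, hconst M hM, hconst Mstar hMstarFeas]
    simp [sub_self]
  have hineq : ∀ M : (Fin s → Fin n) → ℝ, msbpFeasible μ M →
      0 ≤ ∑ i, M i * (Real.log (M i) - Real.log (Mstar i)) := by
    intro M hM
    have h1 : ∑ i, (M i - Mstar i)
        ≤ ∑ i, M i * (Real.log (M i) - Real.log (Mstar i)) :=
      Finset.sum_le_sum fun i _ => ent_le (hM.1 i) (hMsp i)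
    have h2 : ∑ i, (M i - Mstar i) = 0 := by
      rw [Finset.sum_sub_distrib, hmass M hM, hmass Mstar hMstarFeas]; ring
    linarith
  constructor
  · intro M hM
    have := hineq M hM
    have hk := key M hM
    nlinarith
  · intro M hM
    constructor
    · intro heq
      by_contra hne
      obtain ⟨i₀, hi₀⟩ : ∃ i, M i ≠ Mstar i := by
        by_contra hc
        push_neg at hc
        exact hne (funext hc)
      have h1 : ∑ i, (M i - Mstar i)
          < ∑ i, M i * (Real.log (M i) - Real.log (Mstar i)) :=
        Finset.sum_lt_sum (fun i _ => ent_le (hM.1 i) (hMsp i))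
          ⟨i₀, Finset.mem_univ i₀, ent_lt (hM.1 i₀) (hMsp i₀) hi₀⟩
      have h2 : ∑ i, (M i - Mstar i) = 0 := by
        rw [Finset.sum_sub_distrib, hmass M hM, hmass Mstar hMstarFeas]; ring
      have hk := key M hM
      nlinarith
    · intro h; rw [h]
end
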